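/- arXiv:2605.21822 — 2 statements merged into one kernel-verified Lean document; each statement's English description precedes it below -/
import Mathlib

section
/- Let T be a finite trajectory set, Z = {z_1,…,z_m} finite with distribution p, u : T × Z → ℝ, Borda count BC(τ) = (1/|T|)·Σ_z p(z)·S(τ,z) where S(τ,z) = Σ_{τ'∈T} O(τ,τ',z). Fix τ¹, τ² with u(τ¹,z_k) > u(τ²,z_k). If p(z_k) > (|T| − 1) / (N(τ¹,τ²,z_k) + |T|), then BC(τ¹) > BC(τ²). -/
open Finset
open scoped Classical

noncomputable def Ocmp {T Z : Type*} (u : T → Z → ℝ) (a b : T) (z : Z) : ℝ :=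
  if u a z > u b z then 1 else if u a z = u b z then 1/2 else 0

noncomputable def Nbetween {T Z : Type*} [Fintype T] (u : T → Z → ℝ)
    (τ1 τ2 : T) (z : Z) : ℕ :=
  (Finset.univ.filter (fun τ : T =>
    (u τ1 z > u τ z ∧ u τ z > u τ2 z) ∨ (u τ1 z < u τ z ∧ u τ z < u τ2 z))).card

noncomputable def BordaCount {T Z : Type*} [Fintype T] [Fintype Z]
    (u : T → Z → ℝ) (p : Z → ℝ) (a : T) : ℝ :=
  (1 / (Fintype.card T : ℝ)) * ∑ z : Z, p z * ∑ b : T, Ocmp u a b z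

lemma Ocmp_nonneg {T Z : Type*} (u : T → Z → ℝ) (a b : T) (z : Z) :
    0 ≤ Ocmp u a b z := by
  unfold Ocmp; split_ifs <;> norm_num

lemma Ocmp_le_one {T Z : Type*} (u : T → Z → ℝ) (a b : T) (z : Z) :
    Ocmp u a b z ≤ 1 := by
  unfold Ocmp; split_ifs <;> norm_num

lemma Ocmp_self {T Z : Type*} (u : T → Z → ℝ) (a : T) (z : Z) :
    Ocmp u a a z = 1/2 := by
  unfold Ocmp; rw [if_neg (lt_irrefl _), if_pos rfl]

lemma Ocmp_mono {T Z : Type*} (u : T → Z → ℝ) {a b : T} {z : Z}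
    (hab : u b z > u a z) (c : T) : Ocmp u a c z ≤ Ocmp u b c z := by
  unfold Ocmp; split_ifs <;> linarith

theorem stmt_5 {T Z : Type*} [Fintype T] [Fintype Z] [Nonempty T] [Nonempty Z]
    (u : T → Z → ℝ) (p : Z → ℝ)
    (hp_nonneg : ∀ z, 0 ≤ p z) (hp_sum : ∑ z : Z, p z = 1)
    (τ1 τ2 : T) (zk : Z)
    (h : u τ1 zk > u τ2 zk)
    (hpk : p zk > ((Fintype.card T : ℝ) - 1) /
      ((Nbetween u τ1 τ2 zk : ℝ) + (Fintype.card T : ℝ))) :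
    BordaCount u p τ1 > BordaCount u p τ2 := by
  classical
  set n : ℕ := Fintype.card T with hn
  have hne : τ1 ≠ τ2 := by
    intro e; rw [e] at h; exact lt_irrefl _ h
  have hn2 : 2 ≤ n := Fintype.one_lt_card_iff.mpr ⟨τ1, τ2, hne⟩
  set f : Z → T → ℝ := fun z b => Ocmp u τ1 b z - Ocmp u τ2 b z with hf
  clear_value n f
  have hfge : ∀ z b, -1 ≤ f z b := by
    intro z b
    have h1 := Ocmp_nonneg u τ1 b z
    have h2 := Ocmp_le_one u τ2 b z
    simp only [hf]; linarith
  have hfb1 : ∀ z, -(1/2 : ℝ) ≤ f z τ1 := by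
    intro z
    have h2 := Ocmp_le_one u τ2 τ1 z
    simp only [hf, Ocmp_self]; linarith
  have hfb2 : ∀ z, -(1/2 : ℝ) ≤ f z τ2 := by
    intro z
    have h1 := Ocmp_nonneg u τ1 τ2 z
    simp only [hf, Ocmp_self]; linarith
  have hmem2 : τ2 ∈ (Finset.univ : Finset T).erase τ1 := by
    simp [Finset.mem_erase, Ne.symm hne]
  -- lower bound for every z
  have hDlb : ∀ z, -((n : ℝ) - 1) ≤ ∑ b : T, f z b := by
    intro z
    have hsplit : ∑ b : T, f z b
        = f z τ1 + (f z τ2 + ∑ b ∈ ((Finset.univ.erase τ1).erase τ2), f z b) := by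
      rw [← Finset.add_sum_erase _ _ (Finset.mem_univ τ1),
          ← Finset.add_sum_erase _ _ hmem2]
    have hcard : ((Finset.univ.erase τ1).erase τ2).card = n - 2 := by
      rw [Finset.card_erase_of_mem hmem2, Finset.card_erase_of_mem (Finset.mem_univ τ1)]
      rw [Finset.card_univ, ← hn]; omega
    have hrest : -((n : ℝ) - 2) ≤ ∑ b ∈ ((Finset.univ.erase τ1).erase τ2), f z b := by
      have hb := Finset.card_nsmul_le_sum ((Finset.univ.erase τ1).erase τ2) (f z) (-1)
        (fun b _ => hfge z b)
      rw [hcard] at hb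
      have hc : ((n - 2 : ℕ) : ℝ) = (n : ℝ) - 2 := by
        rw [Nat.cast_sub hn2]; norm_num
      rw [nsmul_eq_mul, hc] at hb
      linarith
    have e1 := hfb1 z; have e2 := hfb2 z
    rw [hsplit]; linarith
  -- facts at zk
  have hfone : ∀ b, u τ1 zk > u b zk → u b zk > u τ2 zk → f zk b = 1 := by
    intro b h1 h2
    simp only [hf, Ocmp]
    rw [if_pos h1, if_neg (by linarith : ¬ u τ2 zk > u b zk),
        if_neg (by intro e; linarith : ¬ u τ2 zk = u b zk)]
    ring
  have hfnn : ∀ b, 0 ≤ f zk b := by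
    intro b
    have := Ocmp_mono u h b
    simp only [hf]; linarith
  have hfτ1 : f zk τ1 = 1/2 := by
    have hO : Ocmp u τ2 τ1 zk = 0 := by
      unfold Ocmp
      rw [if_neg (by linarith : ¬ u τ2 zk > u τ1 zk),
          if_neg (ne_of_lt h : u τ2 zk ≠ u τ1 zk)]
    simp only [hf, Ocmp_self, hO]; norm_num
  have hfτ2 : f zk τ2 = 1/2 := by
    have hO : Ocmp u τ1 τ2 zk = 1 := by
      unfold Ocmp; rw [if_pos h]
    simp only [hf, Ocmp_self, hO]; norm_num
  -- lower bound at zk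
  have hDk : (Nbetween u τ1 τ2 zk : ℝ) + 1 ≤ ∑ b : T, f zk b := by
    set P : T → Prop := fun τ =>
      (u τ1 zk > u τ zk ∧ u τ zk > u τ2 zk) ∨ (u τ1 zk < u τ zk ∧ u τ zk < u τ2 zk) with hP
    have hsplit := Finset.sum_filter_add_sum_filter_not Finset.univ P (f zk)
    have hS : ∑ b ∈ Finset.univ.filter P, f zk b = (Nbetween u τ1 τ2 zk : ℝ) := by
      have hone : ∀ b ∈ Finset.univ.filter P, f zk b = 1 := by
        intro b hb
        simp only [Finset.mem_filter, hP] at hb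
        rcases hb.2 with ⟨h1, h2⟩ | ⟨h1, h2⟩
        · exact hfone b h1 h2
        · linarith
      rw [Finset.sum_congr rfl hone, Finset.sum_const, nsmul_eq_mul, mul_one, Nbetween]
    have hτ1nP : τ1 ∈ Finset.univ.filter (fun b => ¬ P b) := by
      simp only [Finset.mem_filter, Finset.mem_univ, true_and, hP]
      rintro (⟨h1, -⟩ | ⟨h1, -⟩) <;> exact lt_irrefl _ h1
    have hτ2nP : τ2 ∈ (Finset.univ.filter (fun b => ¬ P b)).erase τ1 := by
      refine Finset.mem_erase.mpr ⟨Ne.symm hne, ?_⟩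
      simp only [Finset.mem_filter, Finset.mem_univ, true_and, hP]
      rintro (⟨-, h2⟩ | ⟨-, h2⟩) <;> exact lt_irrefl _ h2
    have hT : (1 : ℝ) ≤ ∑ b ∈ Finset.univ.filter (fun b => ¬ P b), f zk b := by
      rw [← Finset.add_sum_erase _ _ hτ1nP, ← Finset.add_sum_erase _ _ hτ2nP]
      have hrest : 0 ≤ ∑ b ∈ ((Finset.univ.filter (fun b => ¬ P b)).erase τ1).erase τ2, f zk b :=
        Finset.sum_nonneg (fun b _ => hfnn b)
      rw [hfτ1, hfτ2]; linarith
    rw [← hsplit, hS]; linarith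
  -- combine
  have hden : (0 : ℝ) < (Nbetween u τ1 τ2 zk : ℝ) + n := by positivity
  have hpk' : (n : ℝ) - 1 < p zk * ((Nbetween u τ1 τ2 zk : ℝ) + n) :=
    (div_lt_iff₀ hden).mp hpk
  have hsum_erase : ∑ z ∈ Finset.univ.erase zk, p z = 1 - p zk := by
    have hh := Finset.add_sum_erase Finset.univ p (Finset.mem_univ zk)
    rw [hp_sum] at hh; linarith
  have key : 0 < ∑ z : Z, p z * ∑ b : T, f z b := by
    have hsplit : ∑ z : Z, p z * ∑ b : T, f z b
        = p zk * (∑ b : T, f zk b) + ∑ z ∈ Finset.univ.erase zk, p z * ∑ b : T, f z b :=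
      (Finset.add_sum_erase Finset.univ (fun z => p z * ∑ b : T, f z b)
        (Finset.mem_univ zk)).symm
    have h1 : p zk * ((Nbetween u τ1 τ2 zk : ℝ) + 1) ≤ p zk * ∑ b : T, f zk b :=
      mul_le_mul_of_nonneg_left hDk (hp_nonneg zk)
    have h2 : ∑ z ∈ Finset.univ.erase zk, p z * (-((n : ℝ) - 1))
        ≤ ∑ z ∈ Finset.univ.erase zk, p z * ∑ b : T, f z b :=
      Finset.sum_le_sum (fun z _ => mul_le_mul_of_nonneg_left (hDlb z) (hp_nonneg z))
    have h3 : ∑ z ∈ Finset.univ.erase zk, p z * (-((n : ℝ) - 1))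
        = (1 - p zk) * (-((n : ℝ) - 1)) := by
      rw [← Finset.sum_mul, hsum_erase]
    rw [hsplit]
    nlinarith [hp_nonneg zk]
  -- conclude
  have hBC : BordaCount u p τ1 - BordaCount u p τ2
      = (1 / (n : ℝ)) * ∑ z : Z, p z * ∑ b : T, f z b := by
    unfold BordaCount
    rw [← hn, ← mul_sub, ← Finset.sum_sub_distrib]
    congr 1
    refine Finset.sum_congr rfl (fun z _ => ?_)
    rw [← mul_sub, ← Finset.sum_sub_distrib]
    simp only [hf]
  have hnpos : (0 : ℝ) < 1 / (n : ℝ) := by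
    have : (0:ℝ) < (n:ℝ) := by exact_mod_cast Nat.lt_of_lt_of_le Nat.zero_lt_two hn2
    positivity
  have hfin : 0 < BordaCount u p τ1 - BordaCount u p τ2 := by
    rw [hBC]; exact mul_pos hnpos key
  linarith
end

section
/- Under the hypotheses of the preceding statement, suppose additionally that for every context z, all trajectories in T have pairwise distinct utilities u(·,z). Then the sharper condition p(z_k) > (1 + max_z N(τ¹,τ²,z)) / (2 + N(τ¹,τ²,z_k) + max_z N(τ¹,τ²,z)) together with u(τ¹,z_k) > u(τ²,z_k) implies BC(τ¹) > BC(τ²). -/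
open Finset
open scoped Classical

lemma Nsymm {T Z : Type*} [Fintype T] (u : T → Z → ℝ) (τ1 τ2 : T) (z : Z) :
    Nbetween u τ2 τ1 z = Nbetween u τ1 τ2 z := by
  unfold Nbetween
  congr 1
  apply Finset.filter_congr
  intro τ _
  constructor <;> (rintro (⟨h1,h2⟩|⟨h1,h2⟩)) <;> [skip;skip;skip;skip] <;> first | exact Or.inl ⟨h2,h1⟩ | exact Or.inr ⟨h2,h1⟩

lemma Dsum {T Z : Type*} [Fintype T] (u : T → Z → ℝ) (τ1 τ2 : T) (z : Z)
    (hd : ∀ τ τ' : T, τ ≠ τ' → u τ z ≠ u τ' z)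
    (hz : u τ1 z > u τ2 z) :
    ∑ b : T, (Ocmp u τ1 b z - Ocmp u τ2 b z) = 1 + (Nbetween u τ1 τ2 z : ℝ) := by
  have hne : τ1 ≠ τ2 := fun e => absurd (congrArg (fun t => u t z) e) (ne_of_gt hz)
  have hpt : ∀ b : T, Ocmp u τ1 b z - Ocmp u τ2 b z =
      (if (u τ1 z > u b z ∧ u b z > u τ2 z) ∨ (u τ1 z < u b z ∧ u b z < u τ2 z)
        then (1:ℝ) else 0)
      + (if b = τ1 then (1:ℝ)/2 else 0) + (if b = τ2 then (1:ℝ)/2 else 0) := by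
    intro b
    by_cases hb1 : b = τ1
    · subst hb1
      simp only [Ocmp, if_neg hne, if_pos rfl]
      split_ifs <;> first
          | linarith
          | (rcases ‹_ ∧ _ ∨ _ ∧ _› with ⟨ha,hb⟩|⟨ha,hb⟩ <;> linarith)
          | (exfalso; apply ‹¬(_ ∧ _ ∨ _ ∧ _)›
             first
              | exact Or.inl ⟨by linarith, by linarith⟩
              | exact Or.inr ⟨by linarith, by linarith⟩)
    · by_cases hb2 : b = τ2
      · subst hb2
        simp only [Ocmp, if_neg hb1, if_pos rfl]
        split_ifs <;> first
          | linarith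
          | (rcases ‹_ ∧ _ ∨ _ ∧ _› with ⟨ha,hb⟩|⟨ha,hb⟩ <;> linarith)
          | (exfalso; apply ‹¬(_ ∧ _ ∨ _ ∧ _)›
             first
              | exact Or.inl ⟨by linarith, by linarith⟩
              | exact Or.inr ⟨by linarith, by linarith⟩)
      · have h1 : u b z ≠ u τ1 z := hd b τ1 hb1
        have h2 : u b z ≠ u τ2 z := hd b τ2 hb2
        simp only [Ocmp, if_neg hb1, if_neg hb2]
        rcases h1.lt_or_gt with hlt1 | hgt1 <;> rcases h2.lt_or_gt with hlt2 | hgt2 <;>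
          split_ifs <;> first
          | linarith
          | (rcases ‹_ ∧ _ ∨ _ ∧ _› with ⟨ha,hb⟩|⟨ha,hb⟩ <;> linarith)
          | (exfalso; apply ‹¬(_ ∧ _ ∨ _ ∧ _)›
             first
              | exact Or.inl ⟨by linarith, by linarith⟩
              | exact Or.inr ⟨by linarith, by linarith⟩)
  calc ∑ b : T, (Ocmp u τ1 b z - Ocmp u τ2 b z)
      = ∑ b : T, ((if (u τ1 z > u b z ∧ u b z > u τ2 z) ∨ (u τ1 z < u b z ∧ u b z < u τ2 z)
          then (1:ℝ) else 0)
        + (if b = τ1 then (1:ℝ)/2 else 0) + (if b = τ2 then (1:ℝ)/2 else 0)) :=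
        Finset.sum_congr rfl (fun b _ => hpt b)
    _ = (Nbetween u τ1 τ2 z : ℝ) + 1/2 + 1/2 := by
        rw [Finset.sum_add_distrib, Finset.sum_add_distrib,
          Finset.sum_ite_eq' univ τ1, Finset.sum_ite_eq' univ τ2]
        simp [Nbetween, Finset.sum_ite, Finset.filter_mem_eq_inter]
    _ = 1 + (Nbetween u τ1 τ2 z : ℝ) := by ring

theorem stmt_6 {T Z : Type*} [Fintype T] [Fintype Z] [Nonempty T] [Nonempty Z]
    (u : T → Z → ℝ) (p : Z → ℝ)
    (hp_nonneg : ∀ z, 0 ≤ p z) (hp_sum : ∑ z : Z, p z = 1)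
    (hdistinct : ∀ z : Z, ∀ τ τ' : T, τ ≠ τ' → u τ z ≠ u τ' z)
    (τ1 τ2 : T) (zk : Z)
    (h : u τ1 zk > u τ2 zk)
    (hpk : p zk > (1 + ((Finset.univ.sup (fun z : Z => Nbetween u τ1 τ2 z) : ℕ) : ℝ)) /
      (2 + (Nbetween u τ1 τ2 zk : ℝ) +
        ((Finset.univ.sup (fun z : Z => Nbetween u τ1 τ2 z) : ℕ) : ℝ))) :
    BordaCount u p τ1 > BordaCount u p τ2 := by
  classical
  set M : ℕ := Finset.univ.sup (fun z : Z => Nbetween u τ1 τ2 z) with hM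
  set D : Z → ℝ := fun z => ∑ b : T, (Ocmp u τ1 b z - Ocmp u τ2 b z) with hD
  have hne : τ1 ≠ τ2 := fun e => absurd (congrArg (fun t => u t zk) e) (ne_of_gt h)
  have hDk : D zk = 1 + (Nbetween u τ1 τ2 zk : ℝ) := Dsum u τ1 τ2 zk (hdistinct zk) h
  have hNM : ∀ z : Z, (Nbetween u τ1 τ2 z : ℝ) ≤ (M : ℝ) := by
    intro z
    exact_mod_cast Nat.cast_le.mpr (Finset.le_sup (f := fun z => Nbetween u τ1 τ2 z)
      (Finset.mem_univ z))
  have hDlb : ∀ z : Z, -(1 + (M : ℝ)) ≤ D z := by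
    intro z
    rcases (hdistinct z τ1 τ2 hne).lt_or_gt with hlt | hgt
    · have h2 := Dsum u τ2 τ1 z (hdistinct z) hlt
      have : D z = -(1 + (Nbetween u τ1 τ2 z : ℝ)) := by
        have : D z = -∑ b : T, (Ocmp u τ2 b z - Ocmp u τ1 b z) := by
          simp [hD, ← Finset.sum_neg_distrib]
        rw [this, h2, Nsymm]
      rw [this]
      have := hNM z
      linarith
    · have h2 := Dsum u τ1 τ2 z (hdistinct z) hgt
      have hN : (0:ℝ) ≤ (Nbetween u τ1 τ2 z : ℝ) := Nat.cast_nonneg _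
      have hM0 : (0:ℝ) ≤ (M : ℝ) := Nat.cast_nonneg _
      have hdz : D z = ∑ b : T, (Ocmp u τ1 b z - Ocmp u τ2 b z) := rfl
      rw [hdz, h2]
      linarith
  have hcard : (0:ℝ) < (Fintype.card T : ℝ) := by
    exact_mod_cast Fintype.card_pos
  have hdiff : BordaCount u p τ1 - BordaCount u p τ2
      = (1 / (Fintype.card T : ℝ)) * ∑ z : Z, p z * D z := by
    unfold BordaCount
    rw [← mul_sub, ← Finset.sum_sub_distrib]
    congr 1
    apply Finset.sum_congr rfl
    intro z _
    rw [← mul_sub, ← Finset.sum_sub_distrib]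
  have hsplit : ∑ z : Z, p z * D z
      = p zk * D zk + ∑ z ∈ Finset.univ.erase zk, p z * D z :=
    (Finset.add_sum_erase _ _ (Finset.mem_univ zk)).symm
  have hpsplit : ∑ z ∈ Finset.univ.erase zk, p z = 1 - p zk := by
    have := Finset.add_sum_erase Finset.univ p (Finset.mem_univ zk)
    rw [hp_sum] at this
    linarith
  have hrest : ∑ z ∈ Finset.univ.erase zk, p z * D z
      ≥ (1 - p zk) * (-(1 + (M : ℝ))) := by
    rw [← hpsplit, Finset.sum_mul]
    apply Finset.sum_le_sum
    intro z _
    exact mul_le_mul_of_nonneg_left (hDlb z) (hp_nonneg z)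
  have hd0 : (0:ℝ) < 2 + (Nbetween u τ1 τ2 zk : ℝ) + (M : ℝ) := by
    have h1 : (0:ℝ) ≤ (Nbetween u τ1 τ2 zk : ℝ) := Nat.cast_nonneg _
    have h2 : (0:ℝ) ≤ (M : ℝ) := Nat.cast_nonneg _
    linarith
  rw [gt_iff_lt, div_lt_iff₀ hd0] at hpk
  have hpos : 0 < ∑ z : Z, p z * D z := by
    rw [hsplit, hDk]
    nlinarith [hrest]
  have : 0 < BordaCount u p τ1 - BordaCount u p τ2 := by
    rw [hdiff]
    positivity
  linarith
end
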